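/- arXiv:2203.09019 — 3 statements merged into one kernel-verified Lean document; each statement's English description precedes it below -/
import Mathlib

section
/- Let S → S' be a pure (universally injective) ring homomorphism of commutative rings. If S' is a splinter, then S is a splinter. -/
universe u

open TensorProduct in
/-- A ring map is pure (universally injective) if for every module `M` over the source,
the map `M → M ⊗ S'` is injective. -/
def RingHom.IsPure {S S' : Type u} [CommRing S] [CommRing S'] (f : S →+* S') : Prop :=
  ∀ (M : Type u) (_ : AddCommGroup M) (_ : Module S M),
    letI := f.toAlgebra
    Function.Injective (fun m : M => (m ⊗ₜ[S] (1 : S') : M ⊗[S] S'))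

/-- A ring map splits as a map of modules over the source. -/
def RingHom.SplitsAsModuleMap {S T : Type u} [CommRing S] [CommRing T] (f : S →+* T) : Prop :=
  letI := f.toAlgebra
  ∃ g : T →ₗ[S] S, ∀ s : S, g (f s) = s

/-- A commutative ring `S` is a splinter if every finite and finitely presented ring map
`S → T` inducing a surjective map on prime spectra splits as a map of `S`-modules. -/
def IsSplinter (S : Type u) [CommRing S] : Prop :=
  ∀ (T : Type u) (_ : CommRing T) (f : S →+* T), f.Finite → f.FinitePresentation →
    Function.Surjective (PrimeSpectrum.comap f) → f.SplitsAsModuleMap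

open TensorProduct

/-- Tower construction: a quotient presentation of an algebra generated by finitely many
integral elements by a finite free finitely presented algebra. -/
lemma exists_free_presentation_aux (n : ℕ) :
    ∀ (S B : Type u) (_ : CommRing S) (_ : CommRing B) (_ : Algebra S B) (t : Fin n → B),
      (∀ i, IsIntegral S (t i)) → Algebra.adjoin S (Set.range t) = ⊤ →
      ∃ (P : Type u) (_ : CommRing P) (_ : Algebra S P),
        Module.Finite S P ∧ Module.Free S P ∧ Algebra.FinitePresentation S P ∧
        ∃ F : P →ₐ[S] B, Function.Surjective F := by
  induction n with
  | zero =>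
    intro S B _ _ _ t _ hadj
    refine ⟨S, ‹_›, inferInstance, inferInstance, inferInstance, inferInstance,
      Algebra.ofId S B, ?_⟩
    intro b
    have hb : b ∈ (⊤ : Subalgebra S B) := trivial
    rw [← hadj] at hb
    have hre : Set.range t = ∅ := Set.range_eq_empty t
    rw [hre, Algebra.adjoin_empty, Algebra.mem_bot] at hb
    obtain ⟨s, hs⟩ := hb
    exact ⟨s, hs⟩
  | succ n IH =>
    intro S B _ _ _ t hint hadj
    obtain ⟨p, hmonic, heval⟩ := hint 0
    have heval' : (Polynomial.aeval (t 0)) p = 0 := heval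
    let S₁ := AdjoinRoot p
    letI : Algebra S₁ B := (AdjoinRoot.liftAlgHom p (Algebra.ofId S B) (t 0) (show p.eval₂ (Algebra.ofId S B : S →+* B) (t 0) = 0 from heval)).toRingHom.toAlgebra
    have halg : ∀ x : S₁, algebraMap S₁ B x = AdjoinRoot.liftAlgHom p (Algebra.ofId S B) (t 0) (show p.eval₂ (Algebra.ofId S B : S →+* B) (t 0) = 0 from heval) x :=
      fun _ => rfl
    haveI : IsScalarTower S S₁ B := IsScalarTower.of_algebraMap_eq (fun s => by
      rw [halg, AdjoinRoot.algebraMap_eq, AdjoinRoot.liftAlgHom_of, Algebra.ofId_apply])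
    have hint' : ∀ i : Fin n, IsIntegral S₁ (t i.succ) := fun i => (hint i.succ).tower_top
    have hadj' : Algebra.adjoin S₁ (Set.range fun i : Fin n => t i.succ) = ⊤ := by
      set A₁ : Subalgebra S₁ B := Algebra.adjoin S₁ (Set.range fun i : Fin n => t i.succ)
        with hA₁
      rw [eq_top_iff]
      intro b _
      have hmem : b ∈ Algebra.adjoin S (Set.range t) := hadj ▸ trivial
      have hsub : Set.range t ⊆ (Subalgebra.restrictScalars S A₁ : Set B) := by
        rintro x ⟨i, rfl⟩
        induction i using Fin.cases with
        | zero =>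
          show t 0 ∈ Subalgebra.restrictScalars S A₁
          have h0 : t 0 = algebraMap S₁ B (AdjoinRoot.root p) := by
            rw [halg, AdjoinRoot.liftAlgHom_root]
          rw [Subalgebra.mem_restrictScalars, h0]
          exact Subalgebra.algebraMap_mem _ _
        | succ j =>
          show t j.succ ∈ Subalgebra.restrictScalars S A₁
          rw [Subalgebra.mem_restrictScalars, hA₁]
          exact Algebra.subset_adjoin ⟨j, rfl⟩
      have hle : Algebra.adjoin S (Set.range t) ≤ Subalgebra.restrictScalars S A₁ :=
        Algebra.adjoin_le hsub
      exact hle hmem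
    obtain ⟨P, _, _, hfin, hfree, hfp, F, hFs⟩ :=
      IH S₁ B inferInstance inferInstance inferInstance (fun i => t i.succ) hint' hadj'
    letI : Algebra S P := ((algebraMap S₁ P).comp (algebraMap S S₁)).toAlgebra
    haveI : IsScalarTower S S₁ P := IsScalarTower.of_algebraMap_eq fun s => rfl
    let pb := AdjoinRoot.powerBasis' hmonic
    haveI : Module.Finite S S₁ := Module.Finite.of_basis pb.basis
    haveI : Module.Free S S₁ := Module.Free.of_basis pb.basis
    haveI : Module.Finite S P := Module.Finite.trans S₁ P
    haveI : Module.Free S P :=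
      Module.Free.of_basis (pb.basis.smulTower (Module.Free.chooseBasis S₁ P))
    haveI : Algebra.FinitePresentation S S₁ := AdjoinRoot.finitePresentation p
    haveI : Algebra.FinitePresentation S P := Algebra.FinitePresentation.trans S S₁ P
    exact ⟨P, inferInstance, inferInstance, inferInstance, inferInstance, inferInstance,
      F.restrictScalars S, hFs⟩

/-- A module-finite and finitely presented algebra is finitely presented as a module
(Stacks 0564). -/
lemma finitePresentation_module_of_finite (S T : Type u) [CommRing S] [CommRing T] [Algebra S T]
    [Module.Finite S T] [Algebra.FinitePresentation S T] : Module.FinitePresentation S T := by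
  obtain ⟨n, t, hspan⟩ := Module.Finite.exists_fin (R := S) (M := T)
  have hadj : Algebra.adjoin S (Set.range t) = ⊤ := by
    rw [eq_top_iff]
    intro x _
    have hx : x ∈ Submodule.span S (Set.range t) := hspan ▸ trivial
    have hle : Submodule.span S (Set.range t) ≤
        Subalgebra.toSubmodule (Algebra.adjoin S (Set.range t)) :=
      Submodule.span_le.mpr (fun y hy => Algebra.subset_adjoin hy)
    exact hle hx
  obtain ⟨P, _, _, hfin, hfree, hfp, F, hFs⟩ :=
    exists_free_presentation_aux n S T ‹_› ‹_› ‹_› t (fun i => IsIntegral.of_finite S (t i)) hadj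
  have hker : (RingHom.ker F.toRingHom).FG :=
    Algebra.FinitePresentation.ker_fG_of_surjective F hFs
  haveI : Module.FinitePresentation S P := Module.finitePresentation_of_projective S P
  apply Module.finitePresentation_of_surjective F.toLinearMap hFs
  haveI : Module.Finite P ↥(RingHom.ker F.toRingHom) := Module.Finite.iff_fg.mpr hker
  haveI : Module.Finite S ↥(RingHom.ker F.toRingHom) :=
    Module.Finite.trans P ↥(RingHom.ker F.toRingHom)
  have heq : LinearMap.ker F.toLinearMap =
      (RingHom.ker F.toRingHom).restrictScalars S := rfl
  rw [heq]
  exact Module.Finite.iff_fg.mp ‹Module.Finite S ↥(RingHom.ker F.toRingHom)›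


private lemma splits_exists_addHom {R A : Type u} [CommRing R] [CommRing A] {φ : R →+* A}
    (h : φ.SplitsAsModuleMap) :
    ∃ G : A →+ R, (∀ (a : R) (x : A), G (φ a * x) = a * G x) ∧ G 1 = 1 := by
  letI := φ.toAlgebra
  obtain ⟨g, hg⟩ := h
  refine ⟨g.toAddMonoidHom, fun a x => ?_, ?_⟩
  · exact g.map_smul a x
  · have h1 := hg 1
    rw [map_one] at h1
    exact h1

private lemma splits_of_addHom {R A : Type u} [CommRing R] [CommRing A] {φ : R →+* A}
    (G : A →+ R) (hmul : ∀ (a : R) (x : A), G (φ a * x) = a * G x)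
    (hsec : ∀ s, G (φ s) = s) : φ.SplitsAsModuleMap := by
  letI := φ.toAlgebra
  exact ⟨{ toFun := G, map_add' := G.map_add', map_smul' := fun a x => hmul a x }, hsec⟩

set_option maxHeartbeats 1000000 in
set_option synthInstance.maxHeartbeats 400000 in
open AlgebraicGeometry CategoryTheory CategoryTheory.Limits in
theorem splinter_descends_along_pure {S S' : Type u} [CommRing S] [CommRing S']
    (f : S →+* S') (hf : f.IsPure) (hS' : IsSplinter S') : IsSplinter S := by
  intro T _T f_T hTfin hTfp hTsurj
  letI : Algebra S S' := f.toAlgebra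
  letI : Algebra S T := f_T.toAlgebra
  letI : Algebra T (S' ⊗[S] T) := Algebra.TensorProduct.rightAlgebra
  -- base change is finite and finitely presented
  have hfin' : (algebraMap S' (S' ⊗[S] T)).Finite :=
    RingHom.finite_isStableUnderBaseChange S T S' (S' ⊗[S] T) hTfin
  have hfp' : (algebraMap S' (S' ⊗[S] T)).FinitePresentation :=
    RingHom.finitePresentation_isStableUnderBaseChange S T S' (S' ⊗[S] T) hTfp
  -- base change is surjective on spectra
  have hsurj' : Function.Surjective (PrimeSpectrum.comap (algebraMap S' (S' ⊗[S] T))) := by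
    have h1 : AlgebraicGeometry.Surjective (Spec.map (CommRingCat.ofHom (algebraMap S T))) :=
      (AlgebraicGeometry.surjective_iff _).mpr hTsurj
    have h2 : AlgebraicGeometry.Surjective
        (pullback.fst (Spec.map (CommRingCat.ofHom (algebraMap S S')))
          (Spec.map (CommRingCat.ofHom (algebraMap S T)))) :=
      MorphismProperty.IsStableUnderBaseChange.of_isPullback (IsPullback.of_hasPullback _ _).flip h1
    haveI := h2
    have h3 : AlgebraicGeometry.Surjective ((pullbackSpecIso S S' T).inv ≫ pullback.fst _ _) :=
      inferInstance
    rw [pullbackSpecIso_inv_fst] at h3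
    exact (AlgebraicGeometry.surjective_iff _).mp h3
  -- split the base-changed map
  have hsplit' := hS' (S' ⊗[S] T) inferInstance (algebraMap S' (S' ⊗[S] T))
    hfin' hfp' hsurj'
  obtain ⟨G, Gmul, Gone⟩ := splits_exists_addHom hsplit'
  -- T is a finitely presented S-module
  haveI : Module.Finite S T := hTfin
  haveI : Algebra.FinitePresentation S T := hTfp
  haveI : Module.FinitePresentation S T := finitePresentation_module_of_finite S T
  obtain ⟨n, t, hspan⟩ := Module.Finite.exists_fin (R := S) (M := T)
  let ℓ : (Fin n → S) →ₗ[S] T :=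
    { toFun := fun z => ∑ i, z i • t i
      map_add' := by intro x y; simp [add_smul, Finset.sum_add_distrib]
      map_smul' := by intro s x; simp [mul_smul, Finset.smul_sum] }
  have hℓsurj : Function.Surjective ℓ := by
    intro x
    have hx : x ∈ Submodule.span S (Set.range t) := hspan ▸ trivial
    obtain ⟨z, hz⟩ := (Submodule.mem_span_range_iff_exists_fun S).mp hx
    exact ⟨z, hz⟩
  obtain ⟨c, hc⟩ := hℓsurj 1
  have hkfg : (LinearMap.ker ℓ).FG := Module.FinitePresentation.fg_ker ℓ hℓsurj
  obtain ⟨m, v, hv⟩ := Submodule.fg_iff_exists_fin_generating_family.mp hkfg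
  let w : Fin (m + 1) → (Fin n → S) := Fin.snoc v c
  let b : Fin (m + 1) → S := Pi.single (Fin.last m) 1
  let u : (Fin n → S) →ₗ[S] (Fin (m + 1) → S) :=
    { toFun := fun z j => ∑ i, w j i * z i
      map_add' := by intro x y; funext j; simp [mul_add, Finset.sum_add_distrib]
      map_smul' := by
        intro s x; funext j
        simp [Finset.mul_sum, mul_left_comm]
    }
  let y' : Fin n → S' := fun i => G ((1 : S') ⊗ₜ[S] t i)
  have key : ∀ z : Fin n → S,
      ∑ i, f (z i) * y' i = G ((1 : S') ⊗ₜ[S] (∑ i, z i • t i)) := by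
    intro z
    rw [tmul_sum, map_sum]
    refine Finset.sum_congr rfl fun i _ => ?_
    have h1 : (1 : S') ⊗ₜ[S] (z i • t i)
        = algebraMap S' (S' ⊗[S] T) (f (z i)) * ((1 : S') ⊗ₜ[S] t i) := by
      rw [Algebra.TensorProduct.algebraMap_apply, Algebra.TensorProduct.tmul_mul_tmul,
        mul_one, one_mul, ← smul_tmul]
      congr 1
      rw [Algebra.smul_def, mul_one]
      rfl
    rw [h1, Gmul]
  have hrel : ∀ j : Fin m, ∑ i, f (v j i) * y' i = 0 := by
    intro j
    have hvj : v j ∈ LinearMap.ker ℓ := by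
      rw [← hv]; exact Submodule.subset_span ⟨j, rfl⟩
    have : ℓ (v j) = 0 := hvj
    rw [key, show (∑ i, v j i • t i) = 0 from this, tmul_zero, map_zero]
  have hone : ∑ i, f (c i) * y' i = 1 := by
    rw [key, show (∑ i, c i • t i) = 1 from hc]
    rw [show ((1 : S') ⊗ₜ[S] (1 : T)) = (1 : S' ⊗[S] T) from rfl]
    exact Gone
  -- purity: descend solvability of the linear system
  let Q := (Fin (m + 1) → S) ⧸ LinearMap.range u
  have hinj := hf Q inferInstance inferInstance
  let E : ((Fin (m + 1) → S) ⊗[S] S') ≃ₗ[S] (Fin (m + 1) → S') :=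
    (TensorProduct.comm S (Fin (m + 1) → S) S') ≪≫ₗ
      ((TensorProduct.piScalarRight S S' S' (Fin (m + 1))).restrictScalars S)
  have hE : ∀ (x : Fin (m + 1) → S) (s' : S'), E (x ⊗ₜ[S] s') = fun j => x j • s' := by
    intro x s'
    simp [E, LinearEquiv.trans_apply, LinearEquiv.restrictScalars_apply,
      TensorProduct.comm_tmul, TensorProduct.piScalarRight_apply,
      TensorProduct.piScalarRightHom_tmul]
  have hx : (u.rTensor S') (∑ i, Pi.single i (1 : S) ⊗ₜ[S] y' i) = b ⊗ₜ[S] (1 : S') := by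
    apply E.injective
    rw [map_sum, map_sum]
    simp only [LinearMap.rTensor_tmul, hE]
    funext j
    rw [Finset.sum_apply]
    have hu : ∀ i, u (Pi.single i (1 : S)) j = w j i := by
      intro i
      simp [u, Pi.single_apply, Finset.sum_ite_eq']
    simp only [hu]
    induction j using Fin.lastCases with
    | last =>
      have hb : b (Fin.last m) = 1 := by simp [b]
      have hw : w (Fin.last m) = c := by simp [w]
      rw [hb, hw, one_smul]
      rw [← hone]
      refine Finset.sum_congr rfl fun i _ => ?_
      rw [Algebra.smul_def]; rfl
    | cast j0 =>
      have hb : b (Fin.castSucc j0) = 0 := by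
        simp [b, Pi.single_apply, (Fin.castSucc_lt_last j0).ne]
      have hw : w (Fin.castSucc j0) = v j0 := by simp [w]
      rw [hb, hw, zero_smul]
      rw [← hrel j0]
      refine Finset.sum_congr rfl fun i _ => ?_
      rw [Algebra.smul_def]; rfl
  have hexact : Function.Exact (u.rTensor S') ((LinearMap.range u).mkQ.rTensor S') :=
    rTensor_exact S' (LinearMap.exact_map_mkQ_range u) (Submodule.mkQ_surjective _)
  have hzero : ((Submodule.Quotient.mk b : Q) ⊗ₜ[S] (1 : S') : Q ⊗[S] S') = 0 := by
    have h1 : ((LinearMap.range u).mkQ.rTensor S') (b ⊗ₜ[S] (1 : S'))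
        = (Submodule.Quotient.mk b : Q) ⊗ₜ[S] (1 : S') := by
      rw [LinearMap.rTensor_tmul]; rfl
    rw [← h1, ← hx]
    exact (hexact _).mpr ⟨_, rfl⟩
  have hq0 : (Submodule.Quotient.mk b : Q) = 0 := by
    apply hinj
    show (Submodule.Quotient.mk b : Q) ⊗ₜ[S] (1 : S') = (0 : Q) ⊗ₜ[S] (1 : S')
    rw [hzero, zero_tmul]
  obtain ⟨y, hy⟩ := (Submodule.Quotient.mk_eq_zero _).mp hq0
  -- extract the equations
  have hy1 : ∑ i, c i * y i = 1 := by
    have h1 := congrFun hy (Fin.last m)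
    have h2 : u y (Fin.last m) = ∑ i, c i * y i := by
      show (∑ i, w (Fin.last m) i * y i) = _
      refine Finset.sum_congr rfl fun i _ => ?_
      simp [w]
    have h3 : b (Fin.last m) = 1 := by simp [b]
    rw [h2, h3] at h1
    exact h1
  have hy0 : ∀ j : Fin m, ∑ i, v j i * y i = 0 := by
    intro j
    have h1 := congrFun hy (Fin.castSucc j)
    have h2 : u y (Fin.castSucc j) = ∑ i, v j i * y i := by
      show (∑ i, w (Fin.castSucc j) i * y i) = _
      refine Finset.sum_congr rfl fun i _ => ?_
      simp [w]
    have h3 : b (Fin.castSucc j) = 0 := by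
      simp [b, Pi.single_apply, (Fin.castSucc_lt_last j).ne]
    rw [h2, h3] at h1
    exact h1
  -- build the splitting
  let φ : (Fin n → S) →ₗ[S] S :=
    { toFun := fun z => ∑ i, z i * y i
      map_add' := by intro x₁ x₂; simp [add_mul, Finset.sum_add_distrib]
      map_smul' := by intro s x; simp [Finset.mul_sum, mul_assoc] }
  have hφker : LinearMap.ker ℓ ≤ LinearMap.ker φ := by
    rw [← hv, Submodule.span_le]
    rintro x ⟨j, rfl⟩
    exact hy0 j
  let e := ℓ.quotKerEquivOfSurjective hℓsurj
  let g : T →ₗ[S] S := ((LinearMap.ker ℓ).liftQ φ hφker).comp e.symm.toLinearMap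
  have hgl : ∀ z, g (ℓ z) = φ z := by
    intro z
    have h1 : e.symm (ℓ z) = Submodule.Quotient.mk z := by
      apply e.injective
      rw [LinearEquiv.apply_symm_apply]
      rfl
    show ((LinearMap.ker ℓ).liftQ φ hφker) (e.symm (ℓ z)) = φ z
    rw [h1, Submodule.liftQ_apply]
  apply splits_of_addHom g.toAddMonoidHom (fun a x => g.map_smul a x)
  intro s
  show g (f_T s) = s
  have h1 : f_T s = ℓ (s • c) := by
    rw [map_smul, hc]
    show f_T s = s • (1 : T)
    rw [Algebra.smul_def, mul_one]
    rfl
  rw [h1, hgl]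
  show (∑ i, (s • c) i * y i) = s
  have h2 : ∀ i, (s • c) i * y i = s * (c i * y i) := by
    intro i
    show s * c i * y i = _
    rw [mul_assoc]
  rw [Finset.sum_congr rfl fun i _ => h2 i, ← Finset.mul_sum, hy1, mul_one]
end

section
/- A ring map A → B splits as a map of A-modules if and only if the trace ideal 𝔱_{B/A} is the unit ideal of A. -/
universe u

/-- The trace ideal of an `A`-algebra `B`: the image of the evaluation-at-1 map
`Hom_A(B, A) → A`. -/
def traceIdeal (A : Type u) (B : Type u) [CommRing A] [CommRing B] [Algebra A B] : Ideal A :=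
  LinearMap.range ((LinearMap.applyₗ (1 : B)) : (B →ₗ[A] A) →ₗ[A] A)

theorem splitsAsModuleMap_iff_traceIdeal_eq_top {A B : Type u} [CommRing A] [CommRing B]
    (f : A →+* B) :
    f.SplitsAsModuleMap ↔ (letI := f.toAlgebra; traceIdeal A B = ⊤) := by
  letI := f.toAlgebra
  have hf : ∀ s : A, f s = s • (1 : B) := fun s => (Algebra.algebraMap_eq_smul_one s)
  constructor
  · rintro ⟨g, hg⟩
    rw [Ideal.eq_top_iff_one]
    exact ⟨g, by simpa using hg 1⟩
  · intro h
    have h1 : (1 : A) ∈ traceIdeal A B := h ▸ Submodule.mem_top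
    obtain ⟨g, hg⟩ := h1
    refine ⟨g, fun s => ?_⟩
    rw [hf, map_smul]
    have : g 1 = 1 := hg
    rw [this, smul_eq_mul, mul_one]
end

section
/- Let R be a Noetherian ring and X any index set. Then the product ring R^X is flat as an R-module. -/
universe u

theorem flat_pi_of_noetherian (R : Type u) [CommRing R] [IsNoetherianRing R] (X : Type u) :
    Module.Flat R (X → R) := by
  refine Module.Flat.of_forall_isTrivialRelation ?_
  intro n f x hfx
  -- the syzygy module
  let φ : (Fin n → R) →ₗ[R] R :=
    { toFun := fun g => ∑ i, f i * g i
      map_add' := by intro g h; simp [mul_add, Finset.sum_add_distrib]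
      map_smul' := by intro c g; simp [Finset.mul_sum, mul_left_comm] }
  let K : Submodule R (Fin n → R) := LinearMap.ker φ
  have hK : K.FG := IsNoetherian.noetherian K
  obtain ⟨S, hS⟩ := hK
  -- each pointwise vector lies in K
  have hmem : ∀ p : X, (fun i => x i p) ∈ K := by
    intro p
    simp only [K, LinearMap.mem_ker, φ, LinearMap.coe_mk, AddHom.coe_mk]
    have := congrFun hfx p
    simpa [Finset.sum_apply] using this
  have hrep : ∀ p : X, ∃ c : (Fin n → R) → R,
      ∑ k ∈ S, c k • k = fun i => x i p := by
    intro p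
    have : (fun i => x i p) ∈ Submodule.span R (S : Set (Fin n → R)) := by
      rw [hS]; exact hmem p
    obtain ⟨c, -, hc⟩ := Submodule.mem_span_finset.mp this; exact ⟨c, hc⟩
  choose c hc using hrep
  refine ⟨S.card, fun i j => (S.equivFin.symm j).1 i, fun j p => c p (S.equivFin.symm j).1, ?_, ?_⟩
  · intro i
    funext p
    have := congrFun (hc p) i
    simp only [Finset.sum_apply, Pi.smul_apply, smul_eq_mul] at this
    rw [← this, ← Finset.sum_attach S (fun k => c p k * k i)]
    rw [Finset.sum_apply, ← S.equivFin.sum_comp]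
    simp [mul_comm]
  · intro j
    have hj : ((S.equivFin.symm j : S) : Fin n → R) ∈ K := by
      rw [← hS]; exact Submodule.subset_span (S.equivFin.symm j).2
    simpa [K, φ] using hj
end
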